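/- Let a, b ∈ ℝ, τ > 0, and set b₁ := e^{−aτ} b. Then the function x₀(t) = e^{at} exp_τ{b₁, t}, t ≥ 0, is the unique solution of the delay differential equation ẋ(t) = a x(t) + b x(t − τ) for t ≥ 0 satisfying the initial condition x₀(t) = e^{at} for t ∈ [−τ, 0]. -/

import Mathlib

open Set Filter Topology Real

noncomputable section

/-- The delayed exponential function `exp_τ{b, t}`. -/
def delayedExp (b τ t : ℝ) : ℝ :=
  if t < -τ then 0
  else if t < 0 then 1
  else ∑ j ∈ Finset.range (⌊t / τ⌋.toNat + 2),
    b ^ j * (t - ((j : ℝ) - 1) * τ) ^ j / (Nat.factorial j)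

/-- `y` solves `ẏ(t) = a y(t) + b y(t−τ)` for `t ≥ 0` with initial condition
`y(t) = e^{at}` on `[−τ,0]`. -/
def IsExpInitialSolution (a b τ : ℝ) (y : ℝ → ℝ) : Prop :=
  ContinuousOn y (Set.Ici (-τ)) ∧
  (∀ t ∈ Set.Icc (-τ) (0:ℝ), y t = Real.exp (a * t)) ∧
  (∀ t ∈ Set.Ici (0:ℝ), HasDerivWithinAt y (a * y t + b * y (t - τ)) (Set.Ici 0) t)

/-! Each term `b^j ((t - (j-1)τ)⁺)^j / j!` vanishes before its breakpoint `(j-1)τ`, so on any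
bounded part of `[-τ, ∞)` the delayed exponential is one fixed finite sum of such terms. The terms
are `C¹` for `j ≥ 2` and satisfy `d/dt term_{j+1}(t) = b · term_j(t - τ)`, so `exp_τ{b₁, ·}` solves
`ẋ(t) = b₁ x(t - τ)`; multiplying by `e^{at}` gives the equation, because `e^{at} b₁ = b e^{a(t-τ)}`.
Uniqueness is the method of steps: on `[kτ, (k+1)τ]` the delayed term is already determined, so the
equation is an ODE with Lipschitz right-hand side. -/

open scoped Nat

lemma exists_lt_natCast_sub_one_mul {τ : ℝ} (hτ : 0 < τ) (t : ℝ) : ∃ N : ℕ, t < (N - 1) * τ := by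
  obtain ⟨N, hN⟩ := exists_nat_gt (t / τ + 1)
  exact ⟨N, (div_lt_iff₀ hτ).1 (by linarith)⟩

lemma hasDerivAt_max_zero_pow_succ {n : ℕ} (hn : n ≠ 0) (t : ℝ) :
    HasDerivAt (fun s : ℝ => max s 0 ^ (n + 1)) ((n + 1) * max t 0 ^ n) t := by
  rcases lt_trichotomy t 0 with ht | rfl | ht
  · rw [max_eq_right ht.le, zero_pow hn, mul_zero]
    refine (hasDerivAt_const t 0).congr_of_eventuallyEq ?_
    filter_upwards [Iio_mem_nhds ht] with s hs
    rw [max_eq_right hs.le, zero_pow n.succ_ne_zero]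
  · rw [max_self, zero_pow hn, mul_zero, ← hasDerivWithinAt_univ,
      ← Iic_union_Ici (a := (0 : ℝ))]
    refine HasDerivWithinAt.union ?_ ?_
    · exact (hasDerivWithinAt_const (0 : ℝ) _ (0 : ℝ)).congr
        (fun s (hs : s ≤ 0) => by simp [max_eq_right hs]) (by simp)
    · refine ((hasDerivAt_pow (n + 1) (0 : ℝ)).hasDerivWithinAt.congr
        (fun s (hs : 0 ≤ s) => by rw [max_eq_left hs]) (by simp)).congr_deriv (by simp [hn])
  · rw [max_eq_left ht.le]
    refine ((hasDerivAt_pow (n + 1) t).congr_of_eventuallyEq ?_).congr_deriv (by simp)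
    filter_upwards [Ioi_mem_nhds ht] with s hs
    rw [max_eq_left hs.le]

namespace DelayedExp

variable {b τ t : ℝ}

def term (b τ : ℝ) (j : ℕ) (t : ℝ) : ℝ :=
  b ^ j * max (t - (j - 1) * τ) 0 ^ j / j !

def partialSum (b τ : ℝ) (N : ℕ) (t : ℝ) : ℝ :=
  ∑ j ∈ Finset.range N, term b τ j t

@[simp]
lemma term_zero : term b τ 0 t = 1 := by
  simp [term]

lemma term_eq_zero {j : ℕ} (hj : j ≠ 0) (ht : t ≤ (j - 1) * τ) : term b τ j t = 0 := by
  rw [term, max_eq_right (by linarith), zero_pow hj, mul_zero, zero_div]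

lemma term_of_le {j : ℕ} (ht : (j - 1) * τ ≤ t) :
    term b τ j t = b ^ j * (t - (j - 1) * τ) ^ j / j ! := by
  rw [term, max_eq_left (by linarith)]

lemma continuous_partialSum (N : ℕ) : Continuous (partialSum b τ N) := by
  unfold partialSum term
  fun_prop

lemma partialSum_eq_of_le (hτ : 0 ≤ τ) {M N : ℕ} (hM : M ≠ 0) (hMN : M ≤ N)
    (ht : t ≤ (M - 1) * τ) : partialSum b τ N t = partialSum b τ M t := by
  refine (Finset.sum_subset (Finset.range_subset_range.2 hMN) fun j _ hj => ?_).symm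
  have hMj : M ≤ j := not_lt.1 (Finset.mem_range.not.1 hj)
  exact term_eq_zero (by omega) (ht.trans (by gcongr))

lemma hasDerivWithinAt_term_succ (j : ℕ) (ht : 0 ≤ t) :
    HasDerivWithinAt (term b τ (j + 1)) (b * term b τ j (t - τ)) (Ici 0) t := by
  rcases j with _ | k
  · refine ((hasDerivAt_id t).const_mul b).hasDerivWithinAt.congr_of_mem
      (fun s (hs : 0 ≤ s) => ?_) ht |>.congr_deriv (by simp [term])
    simp [term, max_eq_left hs]
  · have h := ((hasDerivAt_max_zero_pow_succ k.succ_ne_zero (t - (k + 1) * τ)).comp t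
      ((hasDerivAt_id t).sub_const ((k + 1) * τ))).const_mul (b ^ (k + 2)) |>.div_const ((k + 2) !)
    refine h.hasDerivWithinAt.congr_deriv ?_ |>.congr (fun s _ => by simp [term]) (by simp [term])
    simp only [term, Nat.factorial_succ, Nat.succ_eq_add_one]
    push_cast
    field_simp
    ring_nf

lemma hasDerivWithinAt_partialSum_succ (N : ℕ) (ht : 0 ≤ t) :
    HasDerivWithinAt (partialSum b τ (N + 1)) (b * partialSum b τ N (t - τ)) (Ici 0) t := by
  have h := (HasDerivWithinAt.fun_sum (u := Finset.range N) fun j _ =>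
    hasDerivWithinAt_term_succ (b := b) (τ := τ) j ht).add_const 1
  refine (h.congr_deriv ?_).congr (fun s _ => ?_) ?_
  · simp [partialSum, Finset.mul_sum]
  all_goals simp [partialSum, Finset.sum_range_succ']

end DelayedExp

open DelayedExp

section

variable {b τ t : ℝ}

lemma delayedExp_eq_partialSum (hτ : 0 < τ) (ht : -τ ≤ t) {N : ℕ} (hN : t < (N - 1) * τ) :
    delayedExp b τ t = partialSum b τ N t := by
  rw [delayedExp, if_neg ht.not_gt]
  split_ifs with ht0
  · have hN0 : N ≠ 0 := by
      rintro rfl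
      simp only [CharP.cast_eq_zero, zero_sub, neg_one_mul] at hN
      linarith
    rw [partialSum_eq_of_le hτ.le one_ne_zero (by omega) (by simpa using ht0.le)]
    simp [partialSum]
  · set K := ⌊t / τ⌋₊
    have hKt : K * τ ≤ t := (le_div_iff₀ hτ).1 (Nat.floor_le (div_nonneg (not_lt.1 ht0) hτ.le))
    have htK : t < (K + 1) * τ := (div_lt_iff₀ hτ).1 (Nat.lt_floor_add_one _)
    have hKN : K + 2 ≤ N := by
      have : (K : ℝ) + 1 < N := by nlinarith
      exact_mod_cast this
    rw [Int.floor_toNat, partialSum_eq_of_le hτ.le (by omega) hKN (by push_cast; linarith)]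
    refine Finset.sum_congr rfl fun j hj => (term_of_le ?_).symm
    have hjK : (j : ℝ) ≤ K + 1 := by exact_mod_cast Nat.lt_succ_iff.1 (Finset.mem_range.1 hj)
    nlinarith

lemma delayedExp_eq_one (ht : t ∈ Icc (-τ) 0) : delayedExp b τ t = 1 := by
  rcases ht.2.lt_or_eq with ht0 | rfl
  · simp [delayedExp, ht0, ht.1.not_gt]
  · simp [delayedExp, Finset.sum_range_succ, ht.1.not_gt]

lemma delayedExp_eventuallyEq_partialSum (hτ : 0 < τ) {N : ℕ} (hN : t < (N - 1) * τ) :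
    delayedExp b τ =ᶠ[𝓝[Ici (-τ)] t] partialSum b τ N := by
  filter_upwards [self_mem_nhdsWithin, nhdsWithin_le_nhds (Iio_mem_nhds hN)] with s hs hsN
  exact delayedExp_eq_partialSum hτ hs hsN

lemma continuousOn_delayedExp (hτ : 0 < τ) : ContinuousOn (delayedExp b τ) (Ici (-τ)) := by
  intro t ht
  obtain ⟨N, hN⟩ := exists_lt_natCast_sub_one_mul hτ t
  exact (continuous_partialSum N).continuousWithinAt.congr_of_eventuallyEq
    (delayedExp_eventuallyEq_partialSum hτ hN) (delayedExp_eq_partialSum hτ ht hN)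

lemma hasDerivWithinAt_delayedExp (hτ : 0 < τ) (ht : 0 ≤ t) :
    HasDerivWithinAt (delayedExp b τ) (b * delayedExp b τ (t - τ)) (Ici 0) t := by
  obtain ⟨N, hN⟩ := exists_lt_natCast_sub_one_mul hτ (t - τ)
  have hN' : t < ((N + 1 : ℕ) - 1) * τ := by push_cast; linarith
  rw [delayedExp_eq_partialSum hτ (by linarith) hN]
  refine (hasDerivWithinAt_partialSum_succ N ht).congr_of_eventuallyEq ?_
    (delayedExp_eq_partialSum hτ (by linarith) hN')
  exact (delayedExp_eventuallyEq_partialSum hτ hN').filter_mono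
    (nhdsWithin_mono _ (Ici_subset_Ici.2 (by linarith)))

lemma isExpInitialSolution_exp_mul_delayedExp (a b : ℝ) (hτ : 0 < τ) :
    IsExpInitialSolution a b τ (fun t => exp (a * t) * delayedExp (exp (-a * τ) * b) τ t) := by
  refine ⟨(by fun_prop : Continuous fun t => exp (a * t)).continuousOn.mul
    (continuousOn_delayedExp hτ), fun t ht => by simp [delayedExp_eq_one ht],
    fun t (ht : 0 ≤ t) => ?_⟩
  have hexp : HasDerivAt (fun s => exp (a * s)) (exp (a * t) * a) t := by
    simpa using ((hasDerivAt_id t).const_mul a).exp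
  refine (hexp.hasDerivWithinAt.mul (hasDerivWithinAt_delayedExp hτ ht)).congr_deriv ?_
  simp only [show a * (t - τ) = a * t + -a * τ by ring, exp_add]
  ring

end

namespace IsExpInitialSolution

variable {a b τ : ℝ} {y₁ y₂ : ℝ → ℝ}

lemma eqOn_Icc (h₁ : IsExpInitialSolution a b τ y₁) (h₂ : IsExpInitialSolution a b τ y₂)
    (hτ : 0 ≤ τ) (k : ℕ) : EqOn y₁ y₂ (Icc (-τ) (k * τ)) := by
  induction k with
  | zero =>
    intro t ht
    rw [h₁.2.1 t (by simpa using ht), h₂.2.1 t (by simpa using ht)]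
  | succ k ih =>
    have hk : 0 ≤ k * τ := by positivity
    have hsub : Icc (k * τ) ((k + 1) * τ) ⊆ Ici (-τ) := fun s hs => by
      simp only [mem_Ici]; linarith [hs.1]
    have hstep : EqOn y₁ y₂ (Icc (k * τ) ((k + 1) * τ)) := by
      refine ODE_solution_unique (v := fun t x => a * x + b * y₁ (t - τ)) (K := ‖a‖₊)
        (fun _ => LipschitzWith.of_dist_le_mul fun x y => ?_) (h₁.1.mono hsub)
        (fun t ht => ?_) (h₂.1.mono hsub) (fun t ht => ?_) (ih ⟨by linarith, le_rfl⟩)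
      · simp [Real.dist_eq, ← mul_sub, abs_mul]
      · exact (h₁.2.2 t (hk.trans ht.1)).mono (Ici_subset_Ici.2 (hk.trans ht.1))
      · rw [ih ⟨by linarith [ht.1], by linarith [ht.2]⟩]
        exact (h₂.2.2 t (hk.trans ht.1)).mono (Ici_subset_Ici.2 (hk.trans ht.1))
    intro t ht
    rcases le_total t (k * τ) with htk | htk
    · exact ih ⟨ht.1, htk⟩
    · exact hstep ⟨htk, by simpa using ht.2⟩

lemma eqOn (h₁ : IsExpInitialSolution a b τ y₁) (h₂ : IsExpInitialSolution a b τ y₂)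
    (hτ : 0 < τ) : EqOn y₁ y₂ (Ici (-τ)) := fun t ht => by
  obtain ⟨k, hk⟩ := exists_nat_ge (t / τ)
  exact eqOn_Icc h₁ h₂ hτ.le k ⟨ht, (div_le_iff₀ hτ).1 hk⟩

end IsExpInitialSolution

/-- With `b₁ = e^{−aτ} b`, the function `x₀(t) = e^{at} exp_τ{b₁, t}` is the unique
solution of `ẋ(t) = a x(t) + b x(t−τ)`, `t ≥ 0`, with `x₀(t) = e^{at}` for `t ∈ [−τ,0]`. -/
theorem delayedExp_exp_initial_unique_solution (a b τ : ℝ) (hτ : 0 < τ) :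
    IsExpInitialSolution a b τ (fun t => Real.exp (a * t) * delayedExp (Real.exp (-a * τ) * b) τ t) ∧
    ∀ y : ℝ → ℝ, IsExpInitialSolution a b τ y →
      ∀ t ∈ Set.Ici (-τ),
        y t = Real.exp (a * t) * delayedExp (Real.exp (-a * τ) * b) τ t := by
  have hx₀ := isExpInitialSolution_exp_mul_delayedExp a b hτ
  exact ⟨hx₀, fun y hy => IsExpInitialSolution.eqOn hy hx₀ hτ⟩

end
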